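/- arXiv:1501.05930 — 2 statements merged into one kernel-verified Lean document; each statement's English description precedes it below -/
import Mathlib

section
/- Fix α > 0 and a sequence of sampling rates ρ_n with n·ρ_n → 0 (i.e., ρ_n = o(1/n)). Let {(𝒮_n, τ_n)} be detectors operating at uncertainty level A_n = ⌈2^{αn}⌉ for which there exists ε_n → 0 with ℙ(|𝒮^{≤τ_n}|/τ_n ≤ ρ_n) ≥ 1 − ε_n for all large n, and whose false-alarm probability vanishes: ℙ(τ_n < ν_n) → 0. Then the delay is exponential in n: there exist constants δ > 0 and c > 0 such that for all sufficiently large n, ℙ(τ_n − ν_n ≥ c·2^{αn}) ≥ δ; consequently, for every ε ∈ (0, δ) and all sufficiently large n, the delay satisfies d((𝒮_n, τ_n), ε) ≥ c·2^{αn}. -/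
open Filter Finset

noncomputable section

namespace ChangeDetect

variable {𝒴 : Type} [Fintype 𝒴]

/-- `P` is a probability mass function on the finite alphabet `𝒴`. -/
def IsProb (P : 𝒴 → ℝ) : Prop := (∀ y, 0 ≤ P y) ∧ ∑ y, P y = 1

/-- Relative entropy (base 2): `D(P₁‖P₀) = Σ_y P₁(y) log₂ (P₁(y)/P₀(y))`. -/
def KL (P₁ P₀ : 𝒴 → ℝ) : ℝ := ∑ y, P₁ y * Real.logb 2 (P₁ y / P₀ y)

/-- Uncertainty level `A_n = ⌈2^(αn)⌉`. -/
def Alevel (α : ℝ) (n : ℕ) : ℕ := ⌈(2 : ℝ) ^ (α * n)⌉₊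

/-- `n*(α) = n α / D(P₁‖P₀)`. -/
def nstar (P₀ P₁ : 𝒴 → ℝ) (α : ℝ) (n : ℕ) : ℝ := n * α / KL P₁ P₀

/-- Likelihood of the observation sequence `y` (time `t ∈ {1,…,A+n-1}` is index `t-1`)
when the change starts at time `ν.1 + 1`: coordinates with index in `[ν.1, ν.1+n)`
are distributed according to `P₁`, all others according to `P₀`, independently. -/
def lik (P₀ P₁ : 𝒴 → ℝ) (n : ℕ) {A : ℕ} (ν : Fin A) (y : Fin (A + n - 1) → 𝒴) : ℝ :=
  ∏ i : Fin (A + n - 1), if ν.1 ≤ i.1 ∧ i.1 < ν.1 + n then P₁ (y i) else P₀ (y i)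

open Classical in
/-- Joint probability of an event `E` depending on the (uniform) change point `ν` and the
observations `y`. -/
def jointProb (P₀ P₁ : 𝒴 → ℝ) (n A : ℕ)
    (E : Fin A → (Fin (A + n - 1) → 𝒴) → Prop) : ℝ :=
  (A : ℝ)⁻¹ * ∑ ν : Fin A, ∑ y : Fin (A + n - 1) → 𝒴, if E ν y then lik P₀ P₁ n ν y else 0

open Classical in
/-- Probability of an event under an i.i.d.-`P₀` observation sequence of length `T`. -/
def nullProb (P₀ : 𝒴 → ℝ) (T : ℕ) (E : (Fin T → 𝒴) → Prop) : ℝ :=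
  ∑ y : Fin T → 𝒴, if E y then ∏ i, P₀ (y i) else 0

/-- Expectation under an i.i.d.-`P₀` observation sequence of length `T`. -/
def nullExp (P₀ : 𝒴 → ℝ) (T : ℕ) (f : (Fin T → 𝒴) → ℝ) : ℝ :=
  ∑ y : Fin T → 𝒴, f y * ∏ i, P₀ (y i)

/-- A full-sampling detector: a stopping time `tau` (valued in `{1,…,A+n-1}`, time `t`
corresponding to index `t-1`) with respect to the natural filtration of the observations. -/
structure FullDetector (𝒴 : Type) [Fintype 𝒴] (A n : ℕ) where
  tau : (Fin (A + n - 1) → 𝒴) → ℕ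
  tau_pos : ∀ y, 1 ≤ tau y
  tau_le : ∀ y, tau y ≤ A + n - 1
  stopping : ∀ y y', (∀ i : Fin (A + n - 1), i.1 + 1 ≤ tau y → y i = y' i) → tau y' = tau y

/-- False-alarm probability `ℙ(τ < ν)` of a full-sampling detector. -/
def ffalseAlarm (P₀ P₁ : 𝒴 → ℝ) {A n : ℕ} (D : FullDetector 𝒴 A n) : ℝ :=
  jointProb P₀ P₁ n A fun ν y => D.tau y < ν.1 + 1

/-- Delay `d(τ, ε)`: the least `l ≥ 0` such that `ℙ(τ - ν ≤ l - 1) ≥ 1 - ε`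
(the event `τ - ν ≤ l - 1` being `τ < ν + l`). -/
def fdelay (P₀ P₁ : 𝒴 → ℝ) {A n : ℕ} (D : FullDetector 𝒴 A n) (ε : ℝ) : ℕ :=
  sInf {l : ℕ | 1 - ε ≤ jointProb P₀ P₁ n A fun ν y => D.tau y < ν.1 + 1 + l}

/-- A detector `(𝒮, τ)` with (possibly randomized, adaptive) sampling strategy `samp`
(a set of sampling times in `{1,…,A+n-1}`) and stopping rule `tau`.  `R` is the
randomization seed space, with distribution `μR`.  The field `causal` expresses that the
sampling times are chosen sequentially and adaptively (each new sampling time depending only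
on previously observed samples) and that `tau` is a stopping time relative to the sampled
process: the samples taken up to any time `t`, as well as the decision to stop by time `t`,
are determined by the values observed at the sampled times up to `t`.  The last sample is
taken at time `tau`. -/
structure Detector (𝒴 : Type) [Fintype 𝒴] (A n : ℕ) where
  R : Type
  [fintypeR : Fintype R]
  μR : R → ℝ
  μR_nonneg : ∀ r, 0 ≤ μR r
  μR_sum : ∑ r, μR r = 1
  samp : R → (Fin (A + n - 1) → 𝒴) → Finset ℕ
  tau : R → (Fin (A + n - 1) → 𝒴) → ℕ
  tau_pos : ∀ r y, 1 ≤ tau r y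
  tau_le : ∀ r y, tau r y ≤ A + n - 1
  samp_subset : ∀ r y, samp r y ⊆ Finset.Icc 1 (A + n - 1)
  tau_mem : ∀ r y, tau r y ∈ samp r y
  samp_le_tau : ∀ r y, ∀ t ∈ samp r y, t ≤ tau r y
  causal : ∀ r y y' (t : ℕ),
    (∀ i : Fin (A + n - 1), i.1 + 1 ∈ samp r y → i.1 + 1 ≤ t → y i = y' i) →
    (samp r y').filter (· ≤ t) = (samp r y).filter (· ≤ t) ∧
    (tau r y ≤ t → tau r y' = tau r y) ∧ (tau r y' ≤ t → tau r y' = tau r y)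

attribute [instance] Detector.fintypeR

/-- `𝒮^{≤t}`: the samples taken up to time `t`. -/
def sampUpTo {A n : ℕ} (D : Detector 𝒴 A n) (r : D.R) (y : Fin (A + n - 1) → 𝒴)
    (t : ℕ) : Finset ℕ :=
  (D.samp r y).filter (· ≤ t)

/-- Probability, under the joint law (random seed, uniform change point, observations),
of an event `E`. -/
def dprob (P₀ P₁ : 𝒴 → ℝ) {A n : ℕ} (D : Detector 𝒴 A n)
    (E : D.R → Fin A → (Fin (A + n - 1) → 𝒴) → Prop) : ℝ :=
  ∑ r, D.μR r * jointProb P₀ P₁ n A (E r)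

/-- Probability of an event when the detector is run on an i.i.d.-`P₀` sequence (`ℙ₀`). -/
def dnullProb (P₀ : 𝒴 → ℝ) {A n : ℕ} (D : Detector 𝒴 A n)
    (E : D.R → (Fin (A + n - 1) → 𝒴) → Prop) : ℝ :=
  ∑ r, D.μR r * nullProb P₀ (A + n - 1) (E r)

/-- Expectation when the detector is run on an i.i.d.-`P₀` sequence (`𝔼₀`). -/
def dnullExp (P₀ : 𝒴 → ℝ) {A n : ℕ} (D : Detector 𝒴 A n)
    (f : D.R → (Fin (A + n - 1) → 𝒴) → ℝ) : ℝ :=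
  ∑ r, D.μR r * nullExp P₀ (A + n - 1) (f r)

open Classical in
/-- Conditional probability of an event given `ν = v` (the change starts at time `v.1+1`). -/
def dcondProb (P₀ P₁ : 𝒴 → ℝ) {A n : ℕ} (D : Detector 𝒴 A n) (v : Fin A)
    (E : D.R → (Fin (A + n - 1) → 𝒴) → Prop) : ℝ :=
  ∑ r, D.μR r * ∑ y : Fin (A + n - 1) → 𝒴, if E r y then lik P₀ P₁ n v y else 0

/-- False-alarm probability `ℙ(τ < ν)`. -/
def dfalseAlarm (P₀ P₁ : 𝒴 → ℝ) {A n : ℕ} (D : Detector 𝒴 A n) : ℝ :=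
  dprob P₀ P₁ D fun r ν y => D.tau r y < ν.1 + 1

/-- Delay `d((𝒮,τ), ε)`: the least `l ≥ 0` such that `ℙ(τ - ν ≤ l - 1) ≥ 1 - ε`. -/
def ddelay (P₀ P₁ : 𝒴 → ℝ) {A n : ℕ} (D : Detector 𝒴 A n) (ε : ℝ) : ℕ :=
  sInf {l : ℕ | 1 - ε ≤ dprob P₀ P₁ D fun r ν y => D.tau r y < ν.1 + 1 + l}

/-- Sampling rate `ρ((𝒮,τ), ε)`: the least `x ≥ 0` with `ℙ(|𝒮^{≤τ}|/τ ≤ x) ≥ 1 - ε`. -/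
def dsampRate (P₀ P₁ : 𝒴 → ℝ) {A n : ℕ} (D : Detector 𝒴 A n) (ε : ℝ) : ℝ :=
  sInf {x : ℝ | 0 ≤ x ∧ 1 - ε ≤ dprob P₀ P₁ D fun r ν y =>
    ((sampUpTo D r y (D.tau r y)).card : ℝ) / (D.tau r y : ℝ) ≤ x}

/-!
A detector sampling at rate `ρ` takes at most `m = ρ (A + n - 1) = o(A / n)` samples. Two
change-of-measure facts drive the argument: an event decided by the samples taken before the
change, and an event on which no sample falls into the change window `[ν + 1, ν + n]`, have the
same probability given `ν` as under the pre-change law `ℙ₀`. Averaging over change points late in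
`[1, A]`, a small false-alarm probability forces `ℙ₀(τ ≤ 5A/8)` to be small, and the rate constraint
forces `ℙ₀(more than m samples up to A/2)` to be small. As each sample lies in at most `n` windows,
at most `n m = o(A)` of the `≈ A/2` windows inside `[1, A/2]` are hit; for the others the detector
does not see the change and, like under `ℙ₀`, stops after `5A/8`, i.e. with delay `≥ A/8`.
-/

section EventWeight

variable {α : Type*} [Fintype α]

open Classical in
def eventWeight (w : α → ℝ) (E : α → Prop) : ℝ := ∑ a with E a, w a

lemma eventWeight_eq_sum_ite (w : α → ℝ) (E : α → Prop) [DecidablePred E] :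
    eventWeight w E = ∑ a, if E a then w a else 0 := by
  rw [eventWeight, Finset.sum_filter]
  exact Finset.sum_congr rfl fun a _ => by split_ifs <;> rfl

variable {w : α → ℝ} {E F G : α → Prop}

lemma eventWeight_nonneg (hw : ∀ a, 0 ≤ w a) : 0 ≤ eventWeight w E :=
  Finset.sum_nonneg fun a _ => hw a

lemma eventWeight_mono (hw : ∀ a, 0 ≤ w a) (h : ∀ a, E a → F a) :
    eventWeight w E ≤ eventWeight w F := by
  classical
  exact Finset.sum_le_sum_of_subset_of_nonneg (Finset.monotone_filter_right _ fun a _ => h a)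
    fun a _ _ => hw a

lemma eventWeight_add_eventWeight_not (w : α → ℝ) (E : α → Prop) :
    eventWeight w E + eventWeight w (fun a => ¬E a) = ∑ a, w a := by
  classical
  simp only [eventWeight_eq_sum_ite, ← Finset.sum_add_distrib]
  exact Finset.sum_congr rfl fun a _ => by by_cases hE : E a <;> simp [hE]

lemma eventWeight_le_add (hw : ∀ a, 0 ≤ w a) (h : ∀ a, E a → F a ∨ G a) :
    eventWeight w E ≤ eventWeight w F + eventWeight w G := by
  classical
  simp only [eventWeight_eq_sum_ite, ← Finset.sum_add_distrib]
  gcongr with a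
  have := hw a
  have := h a
  split_ifs <;> simp_all

lemma sum_eventWeight_le {β : Type*} (hw : ∀ a, 0 ≤ w a) (V : Finset β) (E : β → α → Prop)
    [∀ v a, Decidable (E v a)] (C : ℝ) (hC : ∀ a, (#{v ∈ V | E v a} : ℝ) ≤ C) :
    ∑ v ∈ V, eventWeight w (E v) ≤ C * ∑ a, w a := by
  classical
  simp only [eventWeight_eq_sum_ite]
  rw [Finset.sum_comm, Finset.mul_sum]
  gcongr with a
  rw [← Finset.sum_filter, Finset.sum_const, nsmul_eq_mul]
  exact mul_le_mul_of_nonneg_right (hC a) (hw a)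

end EventWeight

section ChangeOfMeasure

lemma sum_mul_eq_sum_mul_of_const {β : Type*} [Fintype β] {g : β → ℝ}
    (hg : ∀ a a', g a = g a') {P Q : β → ℝ} (h : ∑ a, P a = ∑ a, Q a) :
    ∑ a, g a * P a = ∑ a, g a * Q a := by
  rcases isEmpty_or_nonempty β with hβ | ⟨⟨a₀⟩⟩
  · simp
  · simp_rw [hg _ a₀, ← Finset.mul_sum, h]

lemma sum_mul_prod_eq_of_eq_off {ι α : Type*} [Fintype ι] [DecidableEq ι] [Fintype α]
    (W : ι → Prop) [DecidablePred W] {p q : ι → α → ℝ}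
    (hsum : ∀ i, W i → ∑ c, p i c = ∑ c, q i c) (hpq : ∀ i, ¬W i → p i = q i)
    {f : (ι → α) → ℝ} (hf : ∀ y y', (∀ i, ¬W i → y i = y' i) → f y = f y') :
    ∑ y, f y * ∏ i, p i (y i) = ∑ y, f y * ∏ i, q i (y i) := by
  set e := Equiv.piEquivPiSubtypeProd W fun _ => α
  have split : ∀ p' : ι → α → ℝ, ∑ y, f y * ∏ i, p' i (y i)
      = ∑ b, (∑ a, f (e.symm (a, b)) * ∏ i : {i // W i}, p' i (a i))
          * ∏ i : {i // ¬W i}, p' i (b i) := by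
    intro p'
    rw [← e.symm.sum_comp, Fintype.sum_prod_type_right]
    refine Finset.sum_congr rfl fun b _ => ?_
    rw [Finset.sum_mul]
    refine Finset.sum_congr rfl fun a _ => ?_
    rw [← Fintype.prod_subtype_mul_prod_subtype W, mul_assoc]
    congr 2 <;> exact Finset.prod_congr rfl fun i _ => by
      simp [e, Equiv.piEquivPiSubtypeProd_symm_apply, i.2]
  rw [split p, split q]
  refine Finset.sum_congr rfl fun b _ => ?_
  congr 1
  · refine sum_mul_eq_sum_mul_of_const (fun a a' => hf _ _ fun i hi => ?_) ?_
    · simp [e, Equiv.piEquivPiSubtypeProd_symm_apply, hi]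
    · rw [← Fintype.prod_sum, ← Fintype.prod_sum]
      exact Finset.prod_congr rfl fun i _ => hsum i i.2
  · exact Finset.prod_congr rfl fun i _ => by rw [hpq i i.2]

end ChangeOfMeasure

section DetectorProb

variable {P₀ P₁ : 𝒴 → ℝ} {A n : ℕ} {D : Detector 𝒴 A n}

omit [Fintype 𝒴] in
lemma lik_eq_prod (P₀ P₁ : 𝒴 → ℝ) (n : ℕ) {A : ℕ} (v : Fin A) (y : Fin (A + n - 1) → 𝒴) :
    lik P₀ P₁ n v y
      = ∏ i, (if v.1 ≤ i.1 ∧ i.1 < v.1 + n then P₁ else P₀) (y i) := by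
  unfold lik
  exact Finset.prod_congr rfl fun i _ => by split_ifs <;> rfl

lemma sum_prod_eq_one {T : ℕ} {p : Fin T → 𝒴 → ℝ} (hp : ∀ i, IsProb (p i)) :
    ∑ y : Fin T → 𝒴, ∏ i, p i (y i) = 1 := by
  rw [← Fintype.prod_sum]
  exact Finset.prod_eq_one fun i _ => (hp i).2

lemma isProb_ite (h₀ : IsProb P₀) (h₁ : IsProb P₁) (c : Prop) [Decidable c] :
    IsProb (if c then P₁ else P₀) := by
  split_ifs <;> assumption

def nullWeight (P₀ : 𝒴 → ℝ) (D : Detector 𝒴 A n) (a : D.R × (Fin (A + n - 1) → 𝒴)) : ℝ :=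
  D.μR a.1 * ∏ i, P₀ (a.2 i)

def condWeight (P₀ P₁ : 𝒴 → ℝ) (D : Detector 𝒴 A n) (v : Fin A)
    (a : D.R × (Fin (A + n - 1) → 𝒴)) : ℝ :=
  D.μR a.1 * lik P₀ P₁ n v a.2

lemma nullWeight_nonneg (h₀ : IsProb P₀) (a : D.R × (Fin (A + n - 1) → 𝒴)) :
    0 ≤ nullWeight P₀ D a :=
  mul_nonneg (D.μR_nonneg _) (Finset.prod_nonneg fun _ _ => h₀.1 _)

lemma condWeight_nonneg (h₀ : IsProb P₀) (h₁ : IsProb P₁) (v : Fin A)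
    (a : D.R × (Fin (A + n - 1) → 𝒴)) : 0 ≤ condWeight P₀ P₁ D v a := by
  rw [condWeight, lik_eq_prod]
  exact mul_nonneg (D.μR_nonneg _)
    (Finset.prod_nonneg fun _ _ => (isProb_ite h₀ h₁ _).1 _)

lemma sum_nullWeight (h₀ : IsProb P₀) : ∑ a, nullWeight P₀ D a = 1 := by
  simp only [nullWeight, Fintype.sum_prod_type, ← Finset.mul_sum,
    sum_prod_eq_one fun _ => h₀, mul_one, D.μR_sum]

lemma sum_condWeight (h₀ : IsProb P₀) (h₁ : IsProb P₁) (v : Fin A) :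
    ∑ a, condWeight P₀ P₁ D v a = 1 := by
  simp only [condWeight, lik_eq_prod, Fintype.sum_prod_type, ← Finset.mul_sum,
    sum_prod_eq_one fun _ => isProb_ite h₀ h₁ _, mul_one, D.μR_sum]

lemma dnullProb_eq_eventWeight (E : D.R → (Fin (A + n - 1) → 𝒴) → Prop) :
    dnullProb P₀ D E = eventWeight (nullWeight P₀ D) fun a => E a.1 a.2 := by
  classical
  simp only [dnullProb, nullProb, eventWeight_eq_sum_ite, Fintype.sum_prod_type, Finset.mul_sum,
    nullWeight, mul_ite, mul_zero]

lemma dcondProb_eq_eventWeight (v : Fin A) (E : D.R → (Fin (A + n - 1) → 𝒴) → Prop) :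
    dcondProb P₀ P₁ D v E = eventWeight (condWeight P₀ P₁ D v) fun a => E a.1 a.2 := by
  classical
  simp only [dcondProb, eventWeight_eq_sum_ite, Fintype.sum_prod_type, Finset.mul_sum,
    condWeight, mul_ite, mul_zero]

lemma dprob_eq_avg (E : D.R → Fin A → (Fin (A + n - 1) → 𝒴) → Prop) :
    dprob P₀ P₁ D E = (A : ℝ)⁻¹ * ∑ v, dcondProb P₀ P₁ D v fun r y => E r v y := by
  simp only [dprob, jointProb, dcondProb, Finset.mul_sum]
  rw [Finset.sum_comm]
  exact Finset.sum_congr rfl fun v _ => Finset.sum_congr rfl fun r _ => by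
    simp only [mul_left_comm]

variable {E F G : D.R → (Fin (A + n - 1) → 𝒴) → Prop}

lemma dnullProb_nonneg (h₀ : IsProb P₀) : 0 ≤ dnullProb P₀ D E := by
  rw [dnullProb_eq_eventWeight]
  exact eventWeight_nonneg (nullWeight_nonneg h₀)

lemma dnullProb_mono (h₀ : IsProb P₀) (h : ∀ r y, E r y → F r y) :
    dnullProb P₀ D E ≤ dnullProb P₀ D F := by
  simp only [dnullProb_eq_eventWeight]
  exact eventWeight_mono (nullWeight_nonneg h₀) fun a => h a.1 a.2

lemma dnullProb_le_add (h₀ : IsProb P₀) (h : ∀ r y, E r y → F r y ∨ G r y) :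
    dnullProb P₀ D E ≤ dnullProb P₀ D F + dnullProb P₀ D G := by
  simp only [dnullProb_eq_eventWeight]
  exact eventWeight_le_add (nullWeight_nonneg h₀) fun a => h a.1 a.2

lemma dnullProb_add_dnullProb_not (h₀ : IsProb P₀) (E : D.R → (Fin (A + n - 1) → 𝒴) → Prop) :
    dnullProb P₀ D E + dnullProb P₀ D (fun r y => ¬E r y) = 1 := by
  simp only [dnullProb_eq_eventWeight, eventWeight_add_eventWeight_not, sum_nullWeight h₀]

lemma sum_dnullProb_le {β : Type*} (h₀ : IsProb P₀) (V : Finset β)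
    (E : β → D.R → (Fin (A + n - 1) → 𝒴) → Prop) [∀ v r y, Decidable (E v r y)] (C : ℝ)
    (hC : ∀ r y, (#{v ∈ V | E v r y} : ℝ) ≤ C) :
    ∑ v ∈ V, dnullProb P₀ D (E v) ≤ C := by
  simpa only [dnullProb_eq_eventWeight, sum_nullWeight h₀, mul_one] using
    sum_eventWeight_le (nullWeight_nonneg h₀) V (fun v a => E v a.1 a.2) C fun a => hC a.1 a.2

lemma dcondProb_nonneg (h₀ : IsProb P₀) (h₁ : IsProb P₁) (v : Fin A) :
    0 ≤ dcondProb P₀ P₁ D v E := by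
  rw [dcondProb_eq_eventWeight]
  exact eventWeight_nonneg (condWeight_nonneg h₀ h₁ v)

lemma dcondProb_mono (h₀ : IsProb P₀) (h₁ : IsProb P₁) (v : Fin A)
    (h : ∀ r y, E r y → F r y) : dcondProb P₀ P₁ D v E ≤ dcondProb P₀ P₁ D v F := by
  simp only [dcondProb_eq_eventWeight]
  exact eventWeight_mono (condWeight_nonneg h₀ h₁ v) fun a => h a.1 a.2

lemma dcondProb_add_dcondProb_not (h₀ : IsProb P₀) (h₁ : IsProb P₁) (v : Fin A)
    (E : D.R → (Fin (A + n - 1) → 𝒴) → Prop) :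
    dcondProb P₀ P₁ D v E + dcondProb P₀ P₁ D v (fun r y => ¬E r y) = 1 := by
  simp only [dcondProb_eq_eventWeight, eventWeight_add_eventWeight_not, sum_condWeight h₀ h₁]

lemma dcondProb_eq_dnullProb (h₀ : IsProb P₀) (h₁ : IsProb P₁) (v : Fin A)
    (hE : ∀ r (y y' : Fin (A + n - 1) → 𝒴),
      (∀ i : Fin (A + n - 1), ¬(v.1 ≤ i.1 ∧ i.1 < v.1 + n) → y i = y' i) → E r y → E r y') :
    dcondProb P₀ P₁ D v E = dnullProb P₀ D E := by
  classical
  refine Finset.sum_congr rfl fun r _ => congrArg _ ?_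
  have h := sum_mul_prod_eq_of_eq_off (fun i => v.1 ≤ i.1 ∧ i.1 < v.1 + n)
    (p := fun i => if v.1 ≤ i.1 ∧ i.1 < v.1 + n then P₁ else P₀) (q := fun _ => P₀)
    (fun i hi => by simp only [if_pos hi, h₀.2, h₁.2]) (fun i hi => if_neg hi)
    (f := fun y => if E r y then (1 : ℝ) else 0) fun y y' hyy' => by
      have hE' := hE r y' y fun i hi => (hyy' i hi).symm
      by_cases hy : E r y
      · simp [hy, hE r y y' hyy' hy]
      · simp [hy, mt hE' hy]
  simpa only [boole_mul, lik_eq_prod, nullProb] using h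

end DetectorProb

section JointProb

variable {P₀ P₁ : 𝒴 → ℝ} {A n : ℕ} {D : Detector 𝒴 A n}
  {E F : D.R → Fin A → (Fin (A + n - 1) → 𝒴) → Prop}

lemma dprob_mono (h₀ : IsProb P₀) (h₁ : IsProb P₁) (h : ∀ r v y, E r v y → F r v y) :
    dprob P₀ P₁ D E ≤ dprob P₀ P₁ D F := by
  rw [dprob_eq_avg, dprob_eq_avg]
  gcongr with v
  exact dcondProb_mono h₀ h₁ v fun r y => h r v y

lemma dprob_add_dprob_not (h₀ : IsProb P₀) (h₁ : IsProb P₁) (hA : 0 < A)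
    (E : D.R → Fin A → (Fin (A + n - 1) → 𝒴) → Prop) :
    dprob P₀ P₁ D E + dprob P₀ P₁ D (fun r v y => ¬E r v y) = 1 := by
  rw [dprob_eq_avg, dprob_eq_avg, ← mul_add, ← Finset.sum_add_distrib]
  simp only [dcondProb_add_dcondProb_not h₀ h₁, Finset.sum_const, Finset.card_univ,
    Fintype.card_fin, nsmul_eq_mul, mul_one]
  exact inv_mul_cancel₀ (Nat.cast_ne_zero.mpr hA.ne')

lemma dprob_eq_zero (h : ∀ r v y, ¬E r v y) : dprob P₀ P₁ D E = 0 := by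
  simp [dprob, jointProb, h]

lemma sum_dcondProb_le_mul_dprob (h₀ : IsProb P₀) (h₁ : IsProb P₁) (V : Finset (Fin A))
    (E : Fin A → D.R → (Fin (A + n - 1) → 𝒴) → Prop) :
    ∑ v ∈ V, dcondProb P₀ P₁ D v (E v) ≤ A * dprob P₀ P₁ D (fun r v y => E v r y) := by
  obtain rfl | hA := Nat.eq_zero_or_pos A
  · simp [Finset.subset_empty.mp (Finset.subset_univ V)]
  rw [dprob_eq_avg, mul_inv_cancel_left₀ (Nat.cast_ne_zero.mpr hA.ne')]
  exact Finset.sum_le_sum_of_subset_of_nonneg (Finset.subset_univ V)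
    fun v _ _ => dcondProb_nonneg h₀ h₁ v

lemma card_mul_le_mul_dprob (h₀ : IsProb P₀) (h₁ : IsProb P₁) {V : Finset (Fin A)} {q : ℝ}
    {E : Fin A → D.R → (Fin (A + n - 1) → 𝒴) → Prop}
    (hq : ∀ v ∈ V, q ≤ dcondProb P₀ P₁ D v (E v)) :
    #V * q ≤ A * dprob P₀ P₁ D (fun r v y => E v r y) := by
  calc (#V : ℝ) * q = ∑ v ∈ V, q := by rw [Finset.sum_const, nsmul_eq_mul]
    _ ≤ ∑ v ∈ V, dcondProb P₀ P₁ D v (E v) := Finset.sum_le_sum hq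
    _ ≤ _ := sum_dcondProb_le_mul_dprob h₀ h₁ V E

end JointProb

section Counting

lemma card_filter_le_val {A t : ℕ} (ht : t ≤ A) : #{v : Fin A | t ≤ v.1} = A - t := by
  have h := Finset.card_filter_add_card_filter_not (s := Finset.univ)
    (fun v : Fin A => v.1 < t)
  simp only [Fin.card_filter_val_lt, not_lt, Finset.card_univ, Fintype.card_fin] at h
  omega

lemma card_filter_add_le {A : ℕ} (n w : ℕ) : #{v : Fin A | v.1 + n ≤ w} = min A (w + 1 - n) := by
  rw [← Fin.card_filter_val_lt]
  congr 1
  ext v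
  simp only [Finset.mem_filter, Finset.mem_univ, true_and]
  omega

lemma card_filter_mem_window_le {A : ℕ} (n s : ℕ) :
    #{v : Fin A | v.1 + 1 ≤ s ∧ s ≤ v.1 + n} ≤ n := by
  calc #{v : Fin A | v.1 + 1 ≤ s ∧ s ≤ v.1 + n} ≤ #(Finset.Ico (s - n) s) :=
        Finset.card_le_card_of_injOn Fin.val
          (fun v hv => by
            rw [Finset.mem_coe, Finset.mem_filter] at hv
            rw [Finset.mem_coe, Finset.mem_Ico]
            omega)
          Fin.val_injective.injOn
    _ ≤ n := by rw [Nat.card_Ico]; omega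

lemma card_filter_not_disjoint_le {A : ℕ} (S : Finset ℕ) (n w : ℕ) :
    #{v : Fin A | v.1 + n ≤ w ∧ ¬Disjoint S (Finset.Icc (v.1 + 1) (v.1 + n))}
      ≤ n * #{s ∈ S | s ≤ w} := by
  calc _ ≤ #({s ∈ S | s ≤ w}.biUnion fun s => {v : Fin A | v.1 + 1 ≤ s ∧ s ≤ v.1 + n}) := by
        refine Finset.card_le_card fun v hv => ?_
        simp only [Finset.mem_filter, Finset.mem_univ, true_and, Finset.not_disjoint_iff,
          Finset.mem_Icc] at hv
        obtain ⟨hvw, s, hs, hsv⟩ := hv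
        simp only [Finset.mem_biUnion, Finset.mem_filter, Finset.mem_univ, true_and]
        exact ⟨s, ⟨hs, by omega⟩, hsv⟩
    _ ≤ #{s ∈ S | s ≤ w} * n :=
        Finset.card_biUnion_le_card_mul _ _ _ fun s _ => card_filter_mem_window_le n s
    _ = n * #{s ∈ S | s ≤ w} := mul_comm _ _

end Counting

section Sampling

variable {A n : ℕ}

def RateAtMost (D : Detector 𝒴 A n) (ρ : ℝ) (r : D.R) (y : Fin (A + n - 1) → 𝒴) : Prop :=
  ((sampUpTo D r y (D.tau r y)).card : ℝ) / (D.tau r y : ℝ) ≤ ρ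

variable {D : Detector 𝒴 A n}

lemma sampUpTo_tau (r : D.R) (y : Fin (A + n - 1) → 𝒴) :
    sampUpTo D r y (D.tau r y) = D.samp r y :=
  Finset.filter_true_of_mem (D.samp_le_tau r y)

lemma card_filter_samp_le_of_rateAtMost {ρ : ℝ} (hρ : 0 ≤ ρ) {r : D.R}
    {y : Fin (A + n - 1) → 𝒴} (h : RateAtMost D ρ r y) (t : ℕ) :
    (#{s ∈ D.samp r y | s ≤ t} : ℝ) ≤ ρ * (A + n - 1 : ℕ) := by
  have hτ : (0 : ℝ) < D.tau r y := by exact_mod_cast D.tau_pos r y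
  rw [RateAtMost, sampUpTo_tau, div_le_iff₀ hτ] at h
  calc (#{s ∈ D.samp r y | s ≤ t} : ℝ) ≤ #(D.samp r y) := by
        exact_mod_cast Finset.card_filter_le _ _
    _ ≤ ρ * D.tau r y := h
    _ ≤ ρ * (A + n - 1 : ℕ) := by gcongr; exact_mod_cast D.tau_le r y

lemma samp_eq_and_tau_eq (r : D.R) {y y' : Fin (A + n - 1) → 𝒴}
    (h : ∀ i : Fin (A + n - 1), i.1 + 1 ∈ D.samp r y → y i = y' i) :
    D.samp r y' = D.samp r y ∧ D.tau r y' = D.tau r y := by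
  have hc := D.causal r y y' (A + n - 1) fun i hi _ => h i hi
  have hall : ∀ y, {s ∈ D.samp r y | s ≤ A + n - 1} = D.samp r y := fun y =>
    Finset.filter_true_of_mem fun s hs => (Finset.mem_Icc.mp (D.samp_subset r y hs)).2
  exact ⟨by rw [← hall y', ← hall y, hc.1], hc.2.1 (D.tau_le r y)⟩

end Sampling

section Estimates

variable {P₀ P₁ : 𝒴 → ℝ} {A n : ℕ} {D : Detector 𝒴 A n}

lemma dcondProb_eq_dnullProb_of_le (h₀ : IsProb P₀) (h₁ : IsProb P₁) {v : Fin A} {t : ℕ}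
    (ht : t ≤ v.1) {E : D.R → (Fin (A + n - 1) → 𝒴) → Prop}
    (hE : ∀ r y y', (∀ i : Fin (A + n - 1), i.1 + 1 ∈ D.samp r y → i.1 + 1 ≤ t → y i = y' i) →
      E r y → E r y') :
    dcondProb P₀ P₁ D v E = dnullProb P₀ D E :=
  dcondProb_eq_dnullProb h₀ h₁ v fun r y y' hyy' =>
    hE r y y' fun i _ hi => hyy' i (by omega)

lemma sub_mul_dnullProb_tau_le_le (h₀ : IsProb P₀) (h₁ : IsProb P₁) {t : ℕ} (ht : t ≤ A) :
    ((A : ℝ) - t) * dnullProb P₀ D (fun r y => D.tau r y ≤ t) ≤ A * dfalseAlarm P₀ P₁ D := by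
  have h := card_mul_le_mul_dprob h₀ h₁ (V := {v : Fin A | t ≤ v.1})
    (E := fun v r y => D.tau r y < v.1 + 1) fun v hv => by
      rw [Finset.mem_filter] at hv
      calc dnullProb P₀ D (fun r y => D.tau r y ≤ t)
          ≤ dnullProb P₀ D (fun r y => D.tau r y < v.1 + 1) :=
            dnullProb_mono h₀ fun r y hτ => by omega
        _ = _ := (dcondProb_eq_dnullProb_of_le h₀ h₁ le_rfl fun r y y' hyy' hτ => by
            rwa [(D.causal r y y' v.1 hyy').2.1 (by omega)]).symm
  rwa [card_filter_le_val ht, Nat.cast_sub ht] at h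

lemma sub_mul_dnullProb_card_gt_le (h₀ : IsProb P₀) (h₁ : IsProb P₁) {ρ : ℝ} (hρ : 0 ≤ ρ)
    {t : ℕ} (ht : t ≤ A) :
    ((A : ℝ) - t) * dnullProb P₀ D (fun r y => ρ * (A + n - 1 : ℕ) < #{s ∈ D.samp r y | s ≤ t})
      ≤ A * dprob P₀ P₁ D (fun r _ y => ¬RateAtMost D ρ r y) := by
  have h := card_mul_le_mul_dprob h₀ h₁ (V := {v : Fin A | t ≤ v.1})
    (E := fun _ r y => ¬RateAtMost D ρ r y) fun v hv => by
      rw [Finset.mem_filter] at hv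
      calc dnullProb P₀ D (fun r y => ρ * (A + n - 1 : ℕ) < #{s ∈ D.samp r y | s ≤ t})
          = dcondProb P₀ P₁ D v (fun r y => ρ * (A + n - 1 : ℕ) < #{s ∈ D.samp r y | s ≤ t}) :=
            (dcondProb_eq_dnullProb_of_le h₀ h₁ hv.2 fun r y y' hyy' hcard => by
              rwa [(D.causal r y y' t hyy').1]).symm
        _ ≤ _ := dcondProb_mono h₀ h₁ v fun r y hcard hrate =>
            (card_filter_samp_le_of_rateAtMost hρ hrate t).not_gt hcard
  rwa [card_filter_le_val ht, Nat.cast_sub ht] at h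

/-- If no sample falls into the change window, the detector runs as under `ℙ₀`. -/
lemma one_sub_le_dcondProb_lt_tau (h₀ : IsProb P₀) (h₁ : IsProb P₁) (v : Fin A) (u : ℕ) :
    1 - dnullProb P₀ D (fun r y => D.tau r y ≤ u)
        - dnullProb P₀ D (fun r y => ¬Disjoint (D.samp r y) (Finset.Icc (v.1 + 1) (v.1 + n)))
      ≤ dcondProb P₀ P₁ D v (fun r y => u < D.tau r y) := by
  set Q : D.R → (Fin (A + n - 1) → 𝒴) → Prop := fun r y =>
    Disjoint (D.samp r y) (Finset.Icc (v.1 + 1) (v.1 + n)) ∧ u < D.tau r y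
  have hQ : dcondProb P₀ P₁ D v Q = dnullProb P₀ D Q :=
    dcondProb_eq_dnullProb h₀ h₁ v fun r y y' hyy' ⟨hdisj, hτ⟩ => by
      obtain ⟨hs, ht⟩ := samp_eq_and_tau_eq r fun i hi => hyy' i fun hw =>
        Finset.disjoint_left.mp hdisj hi (Finset.mem_Icc.mpr (by omega))
      show Disjoint (D.samp r y') _ ∧ u < D.tau r y'
      rw [hs, ht]
      exact ⟨hdisj, hτ⟩
  have hnotQ := dnullProb_le_add h₀ (D := D) (E := fun r y => ¬Q r y)
    (F := fun r y => D.tau r y ≤ u)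
    (G := fun r y => ¬Disjoint (D.samp r y) (Finset.Icc (v.1 + 1) (v.1 + n)))
    fun r y h => by by_cases hτ : D.tau r y ≤ u <;> simp_all [Q]
  have hmono := dcondProb_mono h₀ h₁ v (E := Q) fun r y h => h.2
  linarith [dnullProb_add_dnullProb_not h₀ Q]

lemma sum_dnullProb_not_disjoint_le (h₀ : IsProb P₀) (w : ℕ) {m : ℝ} (hm : 0 ≤ m) :
    ∑ v : Fin A with v.1 + n ≤ w, dnullProb P₀ D (fun r y =>
        ¬Disjoint (D.samp r y) (Finset.Icc (v.1 + 1) (v.1 + n)) ∧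
          #{s ∈ D.samp r y | s ≤ w} ≤ m)
      ≤ n * m := by
  refine sum_dnullProb_le h₀ _ _ _ fun r y => ?_
  by_cases hM : (#{s ∈ D.samp r y | s ≤ w} : ℝ) ≤ m
  · calc _ ≤ (#{v : Fin A | v.1 + n ≤ w ∧
            ¬Disjoint (D.samp r y) (Finset.Icc (v.1 + 1) (v.1 + n))} : ℝ) := by
          refine Nat.cast_le.mpr (Finset.card_le_card fun v hv => ?_)
          simp only [Finset.mem_filter, Finset.mem_univ, true_and] at hv ⊢
          exact ⟨hv.1, hv.2.1⟩
      _ ≤ n * #{s ∈ D.samp r y | s ≤ w} := by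
          exact_mod_cast card_filter_not_disjoint_le (D.samp r y) n w
      _ ≤ n * m := by gcongr
  · simp only [hM, and_false, Finset.filter_false, Finset.card_empty, Nat.cast_zero]
    positivity

end Estimates

section Delay

variable {P₀ P₁ : 𝒴 → ℝ} {A n : ℕ} {D : Detector 𝒴 A n}

lemma nonneg_of_le_dprob_rateAtMost {ρ ε : ℝ} (hε : ε < 1)
    (h : 1 - ε ≤ dprob P₀ P₁ D (fun r _ y => RateAtMost D ρ r y)) : 0 ≤ ρ := by
  by_contra! hρ
  rw [dprob_eq_zero fun r v y hr => (hr.trans_lt hρ).not_ge (by positivity)] at h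
  linarith

/-- Each change point whose window lies in `[1, w]` and is missed by the sampler is followed by
a stop after `u`, hence by a delay of at least `u - w + n`. -/
lemma card_mul_sub_le_mul_dprob_delay (h₀ : IsProb P₀) (h₁ : IsProb P₁) {w u : ℕ} {m x : ℝ}
    (hm : 0 ≤ m) (hx : x + w ≤ u + n) :
    #{v : Fin A | v.1 + n ≤ w} * (1 - dnullProb P₀ D (fun r y => D.tau r y ≤ u)
        - dnullProb P₀ D (fun r y => m < #{s ∈ D.samp r y | s ≤ w})) - n * m
      ≤ A * dprob P₀ P₁ D (fun r ν y => x ≤ (D.tau r y : ℝ) - (ν.1 + 1)) := by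
  set V : Finset (Fin A) := {v | v.1 + n ≤ w}
  set q₁ := dnullProb P₀ D (fun r y => D.tau r y ≤ u)
  set q₂ := dnullProb P₀ D (fun r y => m < #{s ∈ D.samp r y | s ≤ w})
  set h : Fin A → ℝ := fun v => dnullProb P₀ D (fun r y =>
    ¬Disjoint (D.samp r y) (Finset.Icc (v.1 + 1) (v.1 + n)) ∧ #{s ∈ D.samp r y | s ≤ w} ≤ m)
  have hwindow : ∀ v ∈ V, 1 - q₁ - q₂ - h v
      ≤ dcondProb P₀ P₁ D v (fun r y => x ≤ (D.tau r y : ℝ) - (v.1 + 1)) := by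
    intro v hv
    have hvw : (v.1 : ℝ) + n ≤ w := by exact_mod_cast (Finset.mem_filter.mp hv).2
    have hhit : dnullProb P₀ D (fun r y => ¬Disjoint (D.samp r y) (Finset.Icc (v.1 + 1) (v.1 + n)))
        ≤ q₂ + h v := dnullProb_le_add h₀ fun r y hr => by
      by_cases hM : (#{s ∈ D.samp r y | s ≤ w} : ℝ) ≤ m
      · exact Or.inr ⟨hr, hM⟩
      · exact Or.inl (not_le.mp hM)
    have hlate := dcondProb_mono h₀ h₁ v (E := fun r y => u < D.tau r y)
      (F := fun r y => x ≤ (D.tau r y : ℝ) - (v.1 + 1)) fun r y hτ => by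
        have : (u : ℝ) + 1 ≤ D.tau r y := by exact_mod_cast hτ
        linarith
    linarith [one_sub_le_dcondProb_lt_tau h₀ h₁ (D := D) v u]
  calc #V * (1 - q₁ - q₂) - n * m ≤ ∑ v ∈ V, (1 - q₁ - q₂ - h v) := by
        rw [Finset.sum_sub_distrib, Finset.sum_const, nsmul_eq_mul]
        linarith [sum_dnullProb_not_disjoint_le h₀ (D := D) w hm]
    _ ≤ ∑ v ∈ V, dcondProb P₀ P₁ D v (fun r y => x ≤ (D.tau r y : ℝ) - (v.1 + 1)) :=
        Finset.sum_le_sum hwindow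
    _ ≤ _ := sum_dcondProb_le_mul_dprob h₀ h₁ V fun v r y => x ≤ (D.tau r y : ℝ) - (v.1 + 1)

lemma quarter_le_dprob_delay_ge (h₀ : IsProb P₀) (h₁ : IsProb P₁) {ρ ε x : ℝ}
    (hA : 32 * (n + 2) ≤ A) (hnρ : n * ρ ≤ 1 / 100) (hε : ε ≤ 1 / 32)
    (hrate : 1 - ε ≤ dprob P₀ P₁ D (fun r _ y => RateAtMost D ρ r y))
    (hfa : dfalseAlarm P₀ P₁ D ≤ 1 / 64) (hx : 16 * x ≤ A) :
    1 / 4 ≤ dprob P₀ P₁ D (fun r ν y => x ≤ (D.tau r y : ℝ) - (ν.1 + 1)) := by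
  have hρ := nonneg_of_le_dprob_rateAtMost (by linarith) hrate
  have hAR : (32 : ℝ) * (n + 2) ≤ A := by exact_mod_cast hA
  have hA0 : (0 : ℝ) < A := by linarith
  set w := A / 2
  set e := A / 8
  set u := w + e
  set m := ρ * (A + n - 1 : ℕ)
  have hw : (A : ℝ) ≤ 2 * w + 1 ∧ (2 * w : ℝ) ≤ A := by constructor <;> norm_cast <;> omega
  have he : (A : ℝ) ≤ 8 * e + 7 ∧ (8 * e : ℝ) ≤ A := by constructor <;> norm_cast <;> omega
  set q₁ := dnullProb P₀ D (fun r y => D.tau r y ≤ u)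
  set q₂ := dnullProb P₀ D (fun r y => m < #{s ∈ D.samp r y | s ≤ w})
  have hq₁ : q₁ ≤ 1 / 24 := by
    have h := sub_mul_dnullProb_tau_le_le h₀ h₁ (D := D) (t := u) (by omega)
    have hq : 0 ≤ q₁ := dnullProb_nonneg h₀
    have : 3 / 8 * A * q₁ ≤ 3 / 8 * A * (1 / 24) := by push_cast [u] at h; nlinarith
    exact le_of_mul_le_mul_left this (by positivity)
  have hq₂ : q₂ ≤ 2 * ε := by
    have h := sub_mul_dnullProb_card_gt_le h₀ h₁ (D := D) hρ (t := w) (by omega)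
    have hnot := dprob_add_dprob_not h₀ h₁ (by omega) (D := D) fun r _ y => RateAtMost D ρ r y
    have hq : 0 ≤ q₂ := dnullProb_nonneg h₀
    have : 1 / 2 * A * q₂ ≤ 1 / 2 * A * (2 * ε) := by nlinarith
    exact le_of_mul_le_mul_left this (by positivity)
  have hV : 7 / 16 * (A : ℝ) ≤ #{v : Fin A | v.1 + n ≤ w} := by
    rw [card_filter_add_le, min_eq_right (by omega), Nat.cast_sub (by omega)]
    push_cast
    linarith
  have hnm : n * m ≤ A / 50 := by
    have : ((A + n - 1 : ℕ) : ℝ) ≤ 2 * A := by exact_mod_cast (show A + n - 1 ≤ 2 * A by omega)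
    calc n * m = n * ρ * (A + n - 1 : ℕ) := by ring
      _ ≤ 1 / 100 * (2 * A) := by gcongr
      _ = A / 50 := by ring
  -- The constants work because `7/16 · (1 - 1/24 - 2/32) - 1/50 > 1/4`.
  have hmass : 7 / 16 * A * (43 / 48) ≤ #{v : Fin A | v.1 + n ≤ w} * (1 - q₁ - q₂) :=
    mul_le_mul hV (by linarith) (by norm_num) (Nat.cast_nonneg _)
  have hu : (u : ℝ) = w + e := by simp only [u, Nat.cast_add]
  have hdelay := card_mul_sub_le_mul_dprob_delay h₀ h₁ (D := D) (m := m)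
    (mul_nonneg hρ (Nat.cast_nonneg _)) (show x + w ≤ u + n by linarith)
  exact le_of_mul_le_mul_left (by linarith) hA0

lemma le_ddelay_of_le_dprob (h₀ : IsProb P₀) (h₁ : IsProb P₁) (hA : 0 < A) {δ ε x : ℝ}
    (hε : 0 ≤ ε) (hεδ : ε < δ)
    (h : δ ≤ dprob P₀ P₁ D (fun r ν y => x ≤ (D.tau r y : ℝ) - (ν.1 + 1))) :
    x ≤ ddelay P₀ P₁ D ε := by
  have hne : A + n ∈ {l : ℕ | 1 - ε ≤ dprob P₀ P₁ D fun r ν y => D.tau r y < ν.1 + 1 + l} := by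
    have := dprob_add_dprob_not h₀ h₁ hA (D := D) fun r ν y => D.tau r y < ν.1 + 1 + (A + n)
    rw [dprob_eq_zero (E := fun r ν y => ¬D.tau r y < ν.1 + 1 + (A + n))
      fun r v y h => h (by have := D.tau_le r y; omega)] at this
    show 1 - ε ≤ _
    linarith
  by_contra! hlt
  have hmem : 1 - ε ≤ dprob P₀ P₁ D fun r ν y => D.tau r y < ν.1 + 1 + ddelay P₀ P₁ D ε :=
    Nat.sInf_mem ⟨_, hne⟩
  have hdisj := dprob_mono h₀ h₁ (D := D) (F := fun r ν y => ¬x ≤ (D.tau r y : ℝ) - (ν.1 + 1))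
    fun r v y hτ => by
      have : (D.tau r y : ℝ) < v.1 + 1 + ddelay P₀ P₁ D ε := by exact_mod_cast hτ
      linarith
  linarith [dprob_add_dprob_not h₀ h₁ hA (D := D)
    fun r ν y => x ≤ (D.tau r y : ℝ) - (ν.1 + 1)]

lemma eventually_mul_add_le_two_rpow {α : ℝ} (hα : 0 < α) :
    ∀ᶠ n : ℕ in atTop, 32 * ((n : ℝ) + 2) ≤ 2 ^ (α * n) := by
  have hr : 1 < (2 : ℝ) ^ α := Real.one_lt_rpow one_lt_two hα
  filter_upwards [(isLittleO_pow_const_const_pow_of_one_lt (R := ℝ) 1 hr).bound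
    (by norm_num : (0 : ℝ) < 1 / 64), eventually_ge_atTop 2] with n hn hn2
  have hn2' : (2 : ℝ) ≤ n := by exact_mod_cast hn2
  rw [Real.rpow_mul zero_le_two, Real.rpow_natCast]
  simp only [pow_one, Real.norm_eq_abs, Nat.abs_cast,
    abs_of_pos (pow_pos (zero_lt_one.trans hr) n)] at hn
  linarith

end Delay

theorem statement5_general {𝒴 : Type} [Fintype 𝒴] (P₀ P₁ : 𝒴 → ℝ)
    (h₀ : IsProb P₀) (h₁ : IsProb P₁) (α : ℝ) (hα : 0 < α)
    (ρ : ℕ → ℝ)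
    (hρ0 : Filter.Tendsto (fun n : ℕ => (n : ℝ) * ρ n) Filter.atTop (nhds 0))
    (D : ∀ n : ℕ, Detector 𝒴 (Alevel α n) n)
    (ε : ℕ → ℝ) (hε : Filter.Tendsto ε Filter.atTop (nhds 0))
    (hrate : ∀ᶠ n in Filter.atTop,
      1 - ε n ≤ dprob P₀ P₁ (D n) (fun r ν y =>
        ((sampUpTo (D n) r y ((D n).tau r y)).card : ℝ) / ((D n).tau r y : ℝ) ≤ ρ n))
    (hfa : Filter.Tendsto (fun n => dfalseAlarm P₀ P₁ (D n)) Filter.atTop (nhds 0)) :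
    ∃ δ > (0 : ℝ), ∃ c > (0 : ℝ),
      (∀ᶠ n : ℕ in Filter.atTop,
        δ ≤ dprob P₀ P₁ (D n) (fun r ν y =>
          c * 2 ^ (α * n) ≤ ((D n).tau r y : ℝ) - ((ν.1 : ℝ) + 1))) ∧
      ∀ ε' : ℝ, 0 < ε' → ε' < δ →
        ∀ᶠ n : ℕ in Filter.atTop, c * 2 ^ (α * n) ≤ (ddelay P₀ P₁ (D n) ε' : ℝ) := by
  have hmain : ∀ᶠ n : ℕ in Filter.atTop, 1 / 4 ≤ dprob P₀ P₁ (D n) (fun r ν y =>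
      1 / 16 * 2 ^ (α * n) ≤ ((D n).tau r y : ℝ) - ((ν.1 : ℝ) + 1)) := by
    filter_upwards [hrate, hε.eventually (eventually_le_nhds (by norm_num : (0 : ℝ) < 1 / 32)),
      hfa.eventually (eventually_le_nhds (by norm_num : (0 : ℝ) < 1 / 64)),
      hρ0.eventually (eventually_le_nhds (by norm_num : (0 : ℝ) < 1 / 100)),
      eventually_mul_add_le_two_rpow hα] with n hrate_n hε_n hfa_n hρ_n hgrow
    have hA : (2 : ℝ) ^ (α * n) ≤ Alevel α n := Nat.le_ceil _
    refine quarter_le_dprob_delay_ge h₀ h₁ ?_ hρ_n hε_n hrate_n hfa_n (by linarith)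
    exact_mod_cast (by push_cast; linarith : ((32 * (n + 2) : ℕ) : ℝ) ≤ Alevel α n)
  refine ⟨1 / 4, by norm_num, 1 / 16, by norm_num, hmain, fun ε' hε' hε'δ => ?_⟩
  filter_upwards [hmain] with n hn
  exact le_ddelay_of_le_dprob h₀ h₁ (Nat.ceil_pos.mpr (by positivity)) hε'.le hε'δ hn

/-- Detection, sparse sampling, converse: exponential delay.
Fix `α > 0` and sampling rates with `n·ρ n → 0`.  If detectors operating at uncertainty
level `A_n = ⌈2^(αn)⌉` satisfy, for some `ε n → 0`, eventually
`ℙ(|𝒮^{≤τ}|/τ ≤ ρ n) ≥ 1 - ε n`, and their false-alarm probability vanishes, then the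
delay is exponential in `n`: there are `δ > 0` and `c > 0` with
`ℙ(τ - ν ≥ c·2^(αn)) ≥ δ` for all large `n`; consequently for every `ε ∈ (0, δ)` and all
large `n`, `d((𝒮 n, τ n), ε) ≥ c·2^(αn)`. -/
theorem statement5 {𝒴 : Type} [Fintype 𝒴] (P₀ P₁ : 𝒴 → ℝ)
    (h₀ : IsProb P₀) (h₁ : IsProb P₁) (hac : ∀ y, P₀ y = 0 → P₁ y = 0)
    (hD : 0 < KL P₁ P₀) (α : ℝ) (hα : 0 < α)
    (ρ : ℕ → ℝ)
    (hρ0 : Filter.Tendsto (fun n : ℕ => (n : ℝ) * ρ n) Filter.atTop (nhds 0))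
    (D : ∀ n : ℕ, Detector 𝒴 (Alevel α n) n)
    (ε : ℕ → ℝ) (hε : Filter.Tendsto ε Filter.atTop (nhds 0))
    (hrate : ∀ᶠ n in Filter.atTop,
      1 - ε n ≤ dprob P₀ P₁ (D n) (fun r ν y =>
        ((sampUpTo (D n) r y ((D n).tau r y)).card : ℝ) / ((D n).tau r y : ℝ) ≤ ρ n))
    (hfa : Filter.Tendsto (fun n => dfalseAlarm P₀ P₁ (D n)) Filter.atTop (nhds 0)) :
    ∃ δ > (0 : ℝ), ∃ c > (0 : ℝ),
      (∀ᶠ n : ℕ in Filter.atTop,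
        δ ≤ dprob P₀ P₁ (D n) (fun r ν y =>
          c * 2 ^ (α * n) ≤ ((D n).tau r y : ℝ) - ((ν.1 : ℝ) + 1))) ∧
      ∀ ε' : ℝ, 0 < ε' → ε' < δ →
        ∀ᶠ n : ℕ in Filter.atTop, c * 2 ^ (α * n) ≤ (ddelay P₀ P₁ (D n) ε' : ℝ) :=
  statement5_general P₀ P₁ h₀ h₁ α hα ρ hρ0 D ε hε hrate hfa

end ChangeDetect
end
end

section
/- For any detector (𝒮_n, τ_n) operating at uncertainty level A_n and any value v ∈ {1,…,A_n}, the conditional law, given ν_n = v, of the set of sampling times taken strictly before the change, 𝒮^{≤v−1}, is equal to the law of 𝒮^{≤v−1} under ℙ₀, where ℙ₀ denotes the law obtained when the detector is run on an observation sequence that is i.i.d. P₀ throughout. Consequently, by Markov's inequality, for any ρ > 0 with v·ρ − n − 1 > 0: ℙ(|𝒮^{≤v−1}| ≥ v·ρ − n − 1 | ν_n = v) ≤ 𝔼₀|𝒮^{≤v}| / (v·ρ − n − 1), where 𝔼₀ denotes expectation under ℙ₀. -/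
/-!
Given `ν = v`, the likelihood of the observations is a product whose factors before the change
are `P₀`. By causality of the sampling strategy, the samples taken before the change are a
function of those coordinates alone, so the remaining factors, each of total mass one, sum out
and the conditional law of `𝒮^{≤v-1}` is its law under `ℙ₀`. Since `𝒮^{≤v-1} ⊆ 𝒮^{≤v}`, Markov's
inequality under `ℙ₀` then gives the bound.
-/

open Filter Finset

noncomputable section

namespace ChangeDetect

variable {𝒴 : Type} [Fintype 𝒴]

theorem sum_mul_eq_sum_mul_of_const_s15 {β : Type*} [Fintype β] {f u u' : β → ℝ}
    (hf : ∀ b b', f b = f b') (hu : ∑ b, u b = 1) (hu' : ∑ b, u' b = 1) :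
    ∑ b, f b * u b = ∑ b, f b * u' b := by
  obtain ⟨b₀, -⟩ := Finset.exists_ne_zero_of_sum_ne_zero (hu ▸ one_ne_zero)
  simp only [hf _ b₀, ← Finset.mul_sum, hu, hu']

/-- The coordinates outside `s` sum out, each contributing a factor `∑ z, w i z = 1`. -/
theorem sum_mul_prod_eq_of_dependsOn {ι α : Type*} [Fintype ι] [DecidableEq ι] [Fintype α]
    {s : Set ι} [DecidablePred (· ∈ s)] {G : (ι → α) → ℝ} (hG : DependsOn G s) {w w' : ι → α → ℝ}
    (hww' : ∀ i ∈ s, w i = w' i) (hw : ∀ i ∉ s, ∑ z, w i z = 1)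
    (hw' : ∀ i ∉ s, ∑ z, w' i z = 1) :
    ∑ y, G y * ∏ i, w i (y i) = ∑ y, G y * ∏ i, w' i (y i) := by
  let e := Equiv.piEquivPiSubtypeProd (· ∈ s) (fun _ => α)
  have hsplit : ∀ (u : ι → α → ℝ), ∑ y, G y * ∏ i, u i (y i) =
      ∑ a : (i : s) → α, ∑ b : (i : {i // i ∉ s}) → α,
        (G (e.symm (a, b)) * ∏ i : s, u i (a i)) * ∏ i : {i // i ∉ s}, u i (b i) := by
    intro u
    rw [← e.symm.sum_comp, Fintype.sum_prod_type]
    refine Finset.sum_congr rfl fun a _ => Finset.sum_congr rfl fun b _ => ?_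
    have hin : ∏ i : s, u i (e.symm (a, b) i) = ∏ i : s, u i (a i) :=
      Finset.prod_congr rfl fun i _ => by simp [e, Equiv.piEquivPiSubtypeProd_symm_apply, i.2]
    have hout : ∏ i : {i // i ∉ s}, u i (e.symm (a, b) i) = ∏ i : {i // i ∉ s}, u i (b i) :=
      Finset.prod_congr rfl fun i _ => by simp [e, Equiv.piEquivPiSubtypeProd_symm_apply, i.2]
    rw [← Fintype.prod_subtype_mul_prod_subtype (· ∈ s), hin, hout, mul_assoc]
  have hmass : ∀ u : ι → α → ℝ, (∀ i ∉ s, ∑ z, u i z = 1) →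
      ∑ b : (i : {i // i ∉ s}) → α, ∏ i : {i // i ∉ s}, u i (b i) = 1 := by
    intro u hu
    rw [← Fintype.prod_sum]
    exact Finset.prod_eq_one fun i _ => hu i i.2
  rw [hsplit w, hsplit w']
  refine Finset.sum_congr rfl fun a _ => ?_
  have hfiber : ∀ b b', G (e.symm (a, b)) = G (e.symm (a, b')) := fun b b' =>
    hG fun i hi => by simp [e, Equiv.piEquivPiSubtypeProd_symm_apply, hi]
  simp only [fun i : s => hww' i i.2]
  exact sum_mul_eq_sum_mul_of_const_s15 (fun b b' => by rw [hfiber b b'])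
    (hmass w hw) (hmass w' hw')

theorem sampUpTo_dependsOn {A n : ℕ} (D : Detector 𝒴 A n) (r : D.R) (t : ℕ) :
    DependsOn (fun y => sampUpTo D r y t) {i : Fin (A + n - 1) | i.1 < t} := fun y y' h =>
  (D.causal r y y' t fun i _ hi => h i (show i.1 < t by omega)).1.symm

theorem sampUpTo_mono {A n : ℕ} (D : Detector 𝒴 A n) (r : D.R) (y : Fin (A + n - 1) → 𝒴)
    {t t' : ℕ} (htt' : t ≤ t') : sampUpTo D r y t ⊆ sampUpTo D r y t' :=
  fun _ hx => by
    simp only [sampUpTo, Finset.mem_filter] at hx ⊢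
    exact ⟨hx.1, hx.2.trans htt'⟩

open Classical in
theorem dcondProb_eq_dnullProb_of_dependsOn {P₀ P₁ : 𝒴 → ℝ} (hP₀ : ∑ y, P₀ y = 1)
    (hP₁ : ∑ y, P₁ y = 1) {A n : ℕ} (D : Detector 𝒴 A n) (v : Fin A)
    {E : D.R → (Fin (A + n - 1) → 𝒴) → Prop}
    (hE : ∀ r, DependsOn (E r) {i : Fin (A + n - 1) | i.1 < v.1}) :
    dcondProb P₀ P₁ D v E = dnullProb P₀ D E := by
  refine Finset.sum_congr rfl fun r _ => congrArg _ ?_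
  have h := sum_mul_prod_eq_of_dependsOn (G := fun y => if E r y then (1 : ℝ) else 0)
    (fun y y' h => by simp only [hE r h])
    (w := fun i z => if v.1 ≤ i.1 ∧ i.1 < v.1 + n then P₁ z else P₀ z) (w' := fun _ => P₀)
    (fun i hi => funext fun z => if_neg fun h => absurd h.1 (not_le.2 hi)) (fun i _ => ?_)
    (fun _ _ => hP₀)
  · simpa only [boole_mul, lik, nullProb] using h
  · split_ifs <;> assumption

theorem nullProb_le_nullExp_div {P₀ : 𝒴 → ℝ} (hP₀ : ∀ y, 0 ≤ P₀ y) {T : ℕ}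
    {f g : (Fin T → 𝒴) → ℝ} {c : ℝ} (hc : 0 < c) (hgf : ∀ y, g y ≤ f y)
    (hf : ∀ y, 0 ≤ f y) :
    nullProb P₀ T (fun y => c ≤ g y) ≤ nullExp P₀ T f / c := by
  rw [le_div_iff₀ hc, nullProb, nullExp, Finset.sum_mul]
  refine Finset.sum_le_sum fun y _ => ?_
  have hprod : 0 ≤ ∏ i, P₀ (y i) := Finset.prod_nonneg fun i _ => hP₀ _
  split_ifs with hcg
  · rw [mul_comm]
    exact mul_le_mul_of_nonneg_right (hcg.trans (hgf y)) hprod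
  · rw [zero_mul]
    exact mul_nonneg (hf y) hprod

theorem dnullProb_le_dnullExp_div {P₀ : 𝒴 → ℝ} (hP₀ : ∀ y, 0 ≤ P₀ y) {A n : ℕ}
    (D : Detector 𝒴 A n) {f g : D.R → (Fin (A + n - 1) → 𝒴) → ℝ} {c : ℝ} (hc : 0 < c)
    (hgf : ∀ r y, g r y ≤ f r y) (hf : ∀ r y, 0 ≤ f r y) :
    dnullProb P₀ D (fun r y => c ≤ g r y) ≤ dnullExp P₀ D f / c := by
  rw [dnullProb, dnullExp, Finset.sum_div]
  refine Finset.sum_le_sum fun r _ => ?_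
  rw [mul_div_assoc]
  exact mul_le_mul_of_nonneg_left (nullProb_le_nullExp_div hP₀ hc (hgf r) (hf r))
    (D.μR_nonneg r)

theorem statement15_general {𝒴 : Type} [Fintype 𝒴] (P₀ P₁ : 𝒴 → ℝ)
    (h₀ : IsProb P₀) (h₁ : IsProb P₁) (α : ℝ) (n : ℕ)
    (D : Detector 𝒴 (Alevel α n) n) (v : Fin (Alevel α n)) :
    (∀ F : Finset ℕ → Prop,
      dcondProb P₀ P₁ D v (fun r y => F (sampUpTo D r y v.1))
        = dnullProb P₀ D (fun r y => F (sampUpTo D r y v.1))) ∧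
    ∀ ρ : ℝ, 0 < ρ → 0 < ((v.1 : ℝ) + 1) * ρ - n - 1 →
      dcondProb P₀ P₁ D v (fun r y =>
          ((v.1 : ℝ) + 1) * ρ - n - 1 ≤ ((sampUpTo D r y v.1).card : ℝ))
        ≤ dnullExp P₀ D (fun r y => ((sampUpTo D r y (v.1 + 1)).card : ℝ))
            / (((v.1 : ℝ) + 1) * ρ - n - 1) := by
  have hpre : ∀ F : Finset ℕ → Prop,
      dcondProb P₀ P₁ D v (fun r y => F (sampUpTo D r y v.1))
        = dnullProb P₀ D (fun r y => F (sampUpTo D r y v.1)) := fun F =>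
    dcondProb_eq_dnullProb_of_dependsOn h₀.2 h₁.2 D v fun r _ _ h =>
      congrArg F (sampUpTo_dependsOn D r v.1 h)
  refine ⟨hpre, fun ρ _ hc => ?_⟩
  rw [hpre fun S => ((v.1 : ℝ) + 1) * ρ - n - 1 ≤ (S.card : ℝ)]
  exact dnullProb_le_dnullExp_div h₀.1 D hc
    (fun r y => Nat.cast_le.2 (Finset.card_le_card (sampUpTo_mono D r y v.1.le_succ)))
    (fun _ _ => Nat.cast_nonneg _)

/-- Pre-change samples have the pure-noise law, and a Markov bound.
For any detector operating at uncertainty level `A_n = ⌈2^(αn)⌉` and any change point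
value `v` (change starting at time `v.1 + 1`), the conditional law, given `ν = v`, of the
set `𝒮^{≤v-1}` of samples taken strictly before the change equals its law under `ℙ₀`
(the i.i.d.-`P₀` law).  Consequently, by Markov's inequality, for any `ρ > 0` with
`v·ρ - n - 1 > 0`,
`ℙ(|𝒮^{≤v-1}| ≥ v·ρ - n - 1 ∣ ν = v) ≤ 𝔼₀|𝒮^{≤v}| / (v·ρ - n - 1)`. -/
theorem statement15 {𝒴 : Type} [Fintype 𝒴] (P₀ P₁ : 𝒴 → ℝ)
    (h₀ : IsProb P₀) (h₁ : IsProb P₁) (hac : ∀ y, P₀ y = 0 → P₁ y = 0)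
    (hD : 0 < KL P₁ P₀) (α : ℝ) (hα : 0 < α) (n : ℕ) (hn : 1 ≤ n)
    (D : Detector 𝒴 (Alevel α n) n) (v : Fin (Alevel α n)) :
    (∀ F : Finset ℕ → Prop,
      dcondProb P₀ P₁ D v (fun r y => F (sampUpTo D r y v.1))
        = dnullProb P₀ D (fun r y => F (sampUpTo D r y v.1))) ∧
    ∀ ρ : ℝ, 0 < ρ → 0 < ((v.1 : ℝ) + 1) * ρ - n - 1 →
      dcondProb P₀ P₁ D v (fun r y =>
          ((v.1 : ℝ) + 1) * ρ - n - 1 ≤ ((sampUpTo D r y v.1).card : ℝ))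
        ≤ dnullExp P₀ D (fun r y => ((sampUpTo D r y (v.1 + 1)).card : ℝ))
            / (((v.1 : ℝ) + 1) * ρ - n - 1) :=
  statement15_general P₀ P₁ h₀ h₁ α n D v

end ChangeDetect
end
end
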